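/- Let N be a finite-dimensional (γ,δ)-Yetter-Drinfeld module and α, β ∈ Aut_Hopf(H). Then End(^{(α,β)}N) = End(N)(βα⁻¹) as algebras in _H𝒴𝒟^H: the two algebras coincide, and their left H-actions and right H-coactions agree. -/

import Mathlib

open TensorProduct

noncomputable section

namespace GYD

variable (k H : Type) [Field k] [Ring H] [HopfAlgebra k H]

/-- `φ` is a Hopf algebra automorphism of `H` (a linear equivalence which is both an
algebra morphism and a coalgebra morphism). -/
def IsHopfAut (φ : H ≃ₗ[k] H) : Prop :=
  (∀ x y : H, φ (x * y) = φ x * φ y) ∧ (φ 1 = 1) ∧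
  (∀ h : H, Coalgebra.comul (R := k) (φ h)
      = TensorProduct.map φ.toLinearMap φ.toLinearMap (Coalgebra.comul (R := k) h)) ∧
  (∀ h : H, Coalgebra.counit (R := k) (φ h) = Coalgebra.counit (R := k) h)

/-- `Sinv` is a two-sided inverse of the antipode of `H`. -/
def IsAntipodeInv (Sinv : H → H) : Prop :=
  (∀ h : H, HopfAlgebra.antipode (R := k) (Sinv h) = h) ∧
  (∀ h : H, Sinv (HopfAlgebra.antipode (R := k) h) = h)

/-- The data `(act, coact)` makes `M` an `(α, β)`-Yetter-Drinfeld module over `H`: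
`M` is a left `H`-module, a right `H`-comodule, and the compatibility
`(h·m)₍₀₎ ⊗ (h·m)₍₁₎ = h₂·m₍₀₎ ⊗ β(h₃) m₍₁₎ α(Sinv(h₁))` holds (expressed via
arbitrary finite representations of `(Δ ⊗ id)(Δ h)` and of `coact m`). -/
def IsYD (Sinv α β : H → H) {M : Type} [AddCommGroup M] [Module k M]
    (act : H →ₗ[k] M →ₗ[k] M) (coact : M →ₗ[k] M ⊗[k] H) : Prop :=
  (∀ m : M, act 1 m = m) ∧
  (∀ (g h : H) (m : M), act (g * h) m = act g (act h m)) ∧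
  (∀ m : M, LinearMap.rTensor H coact (coact m)
      = (TensorProduct.assoc k M H H).symm
          (LinearMap.lTensor M (Coalgebra.comul (R := k)) (coact m))) ∧
  (∀ m : M,
    TensorProduct.rid k M (LinearMap.lTensor M (Coalgebra.counit (R := k)) (coact m)) = m) ∧
  (∀ (h : H) (m : M) (s t : Finset ℕ) (a b c : ℕ → H) (m₀ : ℕ → M) (m₁ : ℕ → H),
    LinearMap.rTensor H (Coalgebra.comul (R := k)) (Coalgebra.comul (R := k) h)
        = ∑ i ∈ s, (a i ⊗ₜ[k] b i) ⊗ₜ[k] c i →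
    coact m = ∑ j ∈ t, m₀ j ⊗ₜ[k] m₁ j →
    coact (act h m) = ∑ i ∈ s, ∑ j ∈ t,
      act (b i) (m₀ j) ⊗ₜ[k] (β (c i) * m₁ j * α (Sinv (a i))))

/-- Characterization of the action `h · (m ⊗ n) = θ₁(h₁)·m ⊗ θ₂(h₂)·n` on `M ⊗ N`. -/
def TensorActChar (θ₁ θ₂ : H → H) {M N : Type} [AddCommGroup M] [Module k M]
    [AddCommGroup N] [Module k N]
    (actM : H →ₗ[k] M →ₗ[k] M) (actN : H →ₗ[k] N →ₗ[k] N)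
    (act : H →ₗ[k] (M ⊗[k] N) →ₗ[k] (M ⊗[k] N)) : Prop :=
  ∀ (h : H) (m : M) (n : N) (s : Finset ℕ) (p q : ℕ → H),
    Coalgebra.comul (R := k) h = ∑ i ∈ s, p i ⊗ₜ[k] q i →
    act h (m ⊗ₜ[k] n) = ∑ i ∈ s, actM (θ₁ (p i)) m ⊗ₜ[k] actN (θ₂ (q i)) n

/-- Characterization of the "type two" action `h · (m ⊗ n) = h₂·m ⊗ h₁·n` on `M ⊗ N`. -/
def TensorActCharTwo {M N : Type} [AddCommGroup M] [Module k M]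
    [AddCommGroup N] [Module k N]
    (actM : H →ₗ[k] M →ₗ[k] M) (actN : H →ₗ[k] N →ₗ[k] N)
    (act : H →ₗ[k] (M ⊗[k] N) →ₗ[k] (M ⊗[k] N)) : Prop :=
  ∀ (h : H) (m : M) (n : N) (s : Finset ℕ) (p q : ℕ → H),
    Coalgebra.comul (R := k) h = ∑ i ∈ s, p i ⊗ₜ[k] q i →
    act h (m ⊗ₜ[k] n) = ∑ i ∈ s, actM (q i) m ⊗ₜ[k] actN (p i) n

/-- Characterization of the coaction `m ⊗ n ↦ (m₍₀₎ ⊗ n₍₀₎) ⊗ n₍₁₎ m₍₁₎` on `M ⊗ N`. -/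
def TensorCoactChar {M N : Type} [AddCommGroup M] [Module k M]
    [AddCommGroup N] [Module k N]
    (coactM : M →ₗ[k] M ⊗[k] H) (coactN : N →ₗ[k] N ⊗[k] H)
    (coact : M ⊗[k] N →ₗ[k] (M ⊗[k] N) ⊗[k] H) : Prop :=
  ∀ (m : M) (n : N) (s t : Finset ℕ) (m₀ : ℕ → M) (m₁ : ℕ → H) (n₀ : ℕ → N) (n₁ : ℕ → H),
    coactM m = ∑ i ∈ s, m₀ i ⊗ₜ[k] m₁ i →
    coactN n = ∑ j ∈ t, n₀ j ⊗ₜ[k] n₁ j →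
    coact (m ⊗ₜ[k] n) = ∑ i ∈ s, ∑ j ∈ t, (m₀ i ⊗ₜ[k] n₀ j) ⊗ₜ[k] (n₁ j * m₁ i)

/-- Characterization of the "type two" coaction `m ⊗ n ↦ (m₍₀₎ ⊗ n₍₀₎) ⊗ m₍₁₎ n₍₁₎`. -/
def TensorCoactCharTwo {M N : Type} [AddCommGroup M] [Module k M]
    [AddCommGroup N] [Module k N]
    (coactM : M →ₗ[k] M ⊗[k] H) (coactN : N →ₗ[k] N ⊗[k] H)
    (coact : M ⊗[k] N →ₗ[k] (M ⊗[k] N) ⊗[k] H) : Prop :=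
  ∀ (m : M) (n : N) (s t : Finset ℕ) (m₀ : ℕ → M) (m₁ : ℕ → H) (n₀ : ℕ → N) (n₁ : ℕ → H),
    coactM m = ∑ i ∈ s, m₀ i ⊗ₜ[k] m₁ i →
    coactN n = ∑ j ∈ t, n₀ j ⊗ₜ[k] n₁ j →
    coact (m ⊗ₜ[k] n) = ∑ i ∈ s, ∑ j ∈ t, (m₀ i ⊗ₜ[k] n₀ j) ⊗ₜ[k] (m₁ i * n₁ j)

/-- Characterization of the action `(h · f)(m) = f (θ(h) · m)` on the dual space. -/
def DualActChar (θ : H → H) {M : Type} [AddCommGroup M] [Module k M]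
    (actM : H →ₗ[k] M →ₗ[k] M)
    (actD : H →ₗ[k] Module.Dual k M →ₗ[k] Module.Dual k M) : Prop :=
  ∀ (h : H) (f : Module.Dual k M) (m : M), actD h f m = f (actM (θ h) m)

/-- Characterization of the coaction `f₍₀₎(m) ⊗ f₍₁₎ = f(m₍₀₎) ⊗ σ(m₍₁₎)` on the dual space
(expressed through contraction against evaluation at each `m`). -/
def DualCoactChar (σ : H → H) {M : Type} [AddCommGroup M] [Module k M]
    (coactM : M →ₗ[k] M ⊗[k] H)
    (coactD : Module.Dual k M →ₗ[k] Module.Dual k M ⊗[k] H) : Prop :=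
  ∀ (f : Module.Dual k M) (m : M) (t : Finset ℕ) (m₀ : ℕ → M) (m₁ : ℕ → H),
    coactM m = ∑ j ∈ t, m₀ j ⊗ₜ[k] m₁ j →
    TensorProduct.lid k H (LinearMap.rTensor H (Module.Dual.eval k M m) (coactD f))
      = ∑ j ∈ t, f (m₀ j) • σ (m₁ j)

/-- Characterization of the action `(h · u)(m) = θ(h₁) · u (θ(S(h₂)) · m)` on `End(M)`. -/
def EndActChar (θ : H → H) {M : Type} [AddCommGroup M] [Module k M]
    (actM : H →ₗ[k] M →ₗ[k] M)
    (actE : H →ₗ[k] Module.End k M →ₗ[k] Module.End k M) : Prop :=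
  ∀ (h : H) (u : Module.End k M) (m : M) (s : Finset ℕ) (p q : ℕ → H),
    Coalgebra.comul (R := k) h = ∑ i ∈ s, p i ⊗ₜ[k] q i →
    actE h u m = ∑ i ∈ s,
      actM (θ (p i)) (u (actM (θ (HopfAlgebra.antipode (R := k) (q i))) m))

/-- Characterization of the coaction `u₍₀₎(m) ⊗ u₍₁₎ = u(m₍₀₎)₍₀₎ ⊗ Sinv(m₍₁₎) u(m₍₀₎)₍₁₎`
on `End(M)`, expressed through contraction against evaluation at each `m`. -/
def EndCoactChar (Sinv : H → H) {M : Type} [AddCommGroup M] [Module k M]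
    (coactM : M →ₗ[k] M ⊗[k] H)
    (coactE : Module.End k M →ₗ[k] Module.End k M ⊗[k] H) : Prop :=
  ∀ (u : Module.End k M) (m : M) (t : Finset ℕ) (m₀ : ℕ → M) (m₁ : ℕ → H)
    (r : ℕ → Finset ℕ) (n₀ : ℕ → ℕ → M) (n₁ : ℕ → ℕ → H),
    coactM m = ∑ j ∈ t, m₀ j ⊗ₜ[k] m₁ j →
    (∀ j ∈ t, coactM (u (m₀ j)) = ∑ l ∈ r j, n₀ j l ⊗ₜ[k] n₁ j l) →
    LinearMap.rTensor H (LinearMap.applyₗ (R := k) m) (coactE u)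
      = ∑ j ∈ t, ∑ l ∈ r j, n₀ j l ⊗ₜ[k] (Sinv (m₁ j) * n₁ j l)

/-- Characterization of the action `(h · u)(m) = θ(h₂) · u (θ(Sinv(h₁)) · m)` on `End(M)ᵒᵖ`. -/
def EndOpActChar (θ Sinv : H → H) {M : Type} [AddCommGroup M] [Module k M]
    (actM : H →ₗ[k] M →ₗ[k] M)
    (actE : H →ₗ[k] (Module.End k M)ᵐᵒᵖ →ₗ[k] (Module.End k M)ᵐᵒᵖ) : Prop :=
  ∀ (h : H) (u : (Module.End k M)ᵐᵒᵖ) (m : M) (s : Finset ℕ) (p q : ℕ → H),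
    Coalgebra.comul (R := k) h = ∑ i ∈ s, p i ⊗ₜ[k] q i →
    (actE h u).unop m = ∑ i ∈ s,
      actM (θ (q i)) (u.unop (actM (θ (Sinv (p i))) m))

/-- Characterization of the coaction `u₍₀₎(m) ⊗ u₍₁₎ = u(m₍₀₎)₍₀₎ ⊗ u(m₍₀₎)₍₁₎ S(m₍₁₎)`
on `End(M)ᵒᵖ`, expressed through contraction against evaluation at each `m`. -/
def EndOpCoactChar {M : Type} [AddCommGroup M] [Module k M]
    (coactM : M →ₗ[k] M ⊗[k] H)
    (coactE : (Module.End k M)ᵐᵒᵖ →ₗ[k] (Module.End k M)ᵐᵒᵖ ⊗[k] H) : Prop :=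
  ∀ (u : (Module.End k M)ᵐᵒᵖ) (m : M) (t : Finset ℕ) (m₀ : ℕ → M) (m₁ : ℕ → H)
    (r : ℕ → Finset ℕ) (n₀ : ℕ → ℕ → M) (n₁ : ℕ → ℕ → H),
    coactM m = ∑ j ∈ t, m₀ j ⊗ₜ[k] m₁ j →
    (∀ j ∈ t, coactM (u.unop (m₀ j)) = ∑ l ∈ r j, n₀ j l ⊗ₜ[k] n₁ j l) →
    LinearMap.rTensor H ((LinearMap.applyₗ (R := k) m).comp
        (MulOpposite.opLinearEquiv k).symm.toLinearMap) (coactE u)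
      = ∑ j ∈ t, ∑ l ∈ r j,
          n₀ j l ⊗ₜ[k] (n₁ j l * HopfAlgebra.antipode (R := k) (m₁ j))

/-- `A`, with the Yetter-Drinfeld structure `(act, coact)`, is an algebra in the braided
category of Yetter-Drinfeld modules over `H`. -/
def IsYDAlgebra (Sinv : H → H) {A : Type} [Ring A] [Algebra k A]
    (act : H →ₗ[k] A →ₗ[k] A) (coact : A →ₗ[k] A ⊗[k] H) : Prop :=
  IsYD k H Sinv id id act coact ∧
  (∀ (h : H) (a b : A) (s : Finset ℕ) (p q : ℕ → H),
    Coalgebra.comul (R := k) h = ∑ i ∈ s, p i ⊗ₜ[k] q i →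
    act h (a * b) = ∑ i ∈ s, act (p i) a * act (q i) b) ∧
  (∀ h : H, act h 1 = Coalgebra.counit (R := k) h • (1 : A)) ∧
  (coact 1 = (1 : A) ⊗ₜ[k] (1 : H)) ∧
  (∀ (a b : A) (s t : Finset ℕ) (a₀ : ℕ → A) (a₁ : ℕ → H) (b₀ : ℕ → A) (b₁ : ℕ → H),
    coact a = ∑ i ∈ s, a₀ i ⊗ₜ[k] a₁ i →
    coact b = ∑ j ∈ t, b₀ j ⊗ₜ[k] b₁ j →
    coact (a * b) = ∑ i ∈ s, ∑ j ∈ t, (a₀ i * b₀ j) ⊗ₜ[k] (b₁ j * a₁ i))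

/-- Characterization of the smash product multiplication
`(a # b)(a' # b') = a a'₍₀₎ # (a'₍₁₎ · b) b'` on `A ⊗ B`. -/
def SmashMulChar {A B : Type} [Ring A] [Algebra k A] [Ring B] [Algebra k B]
    (actB : H →ₗ[k] B →ₗ[k] B) (coactA : A →ₗ[k] A ⊗[k] H)
    (mul : (A ⊗[k] B) →ₗ[k] (A ⊗[k] B) →ₗ[k] (A ⊗[k] B)) : Prop :=
  ∀ (a a' : A) (b b' : B) (t : Finset ℕ) (a₀ : ℕ → A) (a₁ : ℕ → H),
    coactA a' = ∑ j ∈ t, a₀ j ⊗ₜ[k] a₁ j →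
    mul (a ⊗ₜ[k] b) (a' ⊗ₜ[k] b') = ∑ j ∈ t, (a * a₀ j) ⊗ₜ[k] (actB (a₁ j) b * b')

end GYD

/-! Each side of the two identities is determined by the formula characterising it: an action
by `EndActChar`, and a coaction by `EndCoactChar`, because `End(N) ⊗ H → Hom(N, N ⊗ H)` is
injective for finite-dimensional `N`. It therefore suffices to check that the action of `End(N)`
precomposed with `βα⁻¹`, and its coaction followed by `αβ⁻¹`, satisfy the formulas defining
`End(^{(α,β)}N)`. This is a direct computation, using that Hopf automorphisms commute with the
antipode and hence with its inverse. -/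

open HopfAlgebra LinearMap

open WithConv in
/-- `f ∘ S` and `S ∘ f` are a left and a right inverse of `f` for the convolution product. -/
theorem BialgHom.antipode_comp {R A B : Type*} [CommSemiring R] [Semiring A] [HopfAlgebra R A]
    [Semiring B] [HopfAlgebra R B] (f : A →ₐc[R] B) :
    antipode R ∘ₗ (f : A →ₗ[R] B) = (f : A →ₗ[R] B) ∘ₗ antipode R := by
  have left_inv : toConv ((f : A →ₗ[R] B) ∘ₗ antipode R) * toConv (f : A →ₗ[R] B) = 1 := by
    have := algHom_comp_convMul_distrib (f : A →ₐ[R] B) (toConv (antipode R)) (toConv id)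
    rw [antipode_mul_id] at this
    apply ofConv_injective
    refine this.symm.trans ?_
    ext a
    exact (f : A →ₐ[R] B).commutes _
  have right_inv : toConv (f : A →ₗ[R] B) * toConv (antipode R ∘ₗ (f : A →ₗ[R] B)) = 1 := by
    have := convMul_comp_coalgHom_distrib (toConv id) (toConv (antipode R)) (f : A →ₗc[R] B)
    rw [id_mul_antipode] at this
    apply ofConv_injective
    refine this.symm.trans ?_
    ext a
    simp
  exact congrArg ofConv (left_inv_eq_right_inv left_inv right_inv).symm

namespace TensorProduct

variable {R M N : Type*} [CommSemiring R] [AddCommMonoid M] [Module R M] [AddCommMonoid N]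
  [Module R N]

theorem exists_sum_nat_tmul (x : M ⊗[R] N) :
    ∃ (s : Finset ℕ) (m : ℕ → M) (n : ℕ → N), x = ∑ i ∈ s, m i ⊗ₜ[R] n i := by
  obtain ⟨S, rfl⟩ := exists_finset x
  refine ⟨Finset.range S.toList.length, fun i => (S.toList.getD i 0).1,
    fun i => (S.toList.getD i 0).2, ?_⟩
  rw [← Finset.sum_map_toList, Finset.sum_range, ← List.sum_ofFn]
  congr 1
  apply List.ext_getElem <;> simp

theorem eq_sum_of_lTensor_eq_sum {P : Type*} [AddCommMonoid P] [Module R P] (e : N ≃ₗ[R] P)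
    {x : M ⊗[R] N} {s : Finset ℕ} {m : ℕ → M} {p : ℕ → P}
    (hx : lTensor M e.toLinearMap x = ∑ i ∈ s, m i ⊗ₜ[R] p i) :
    x = ∑ i ∈ s, m i ⊗ₜ[R] e.symm (p i) := by
  apply (LinearEquiv.lTensor M e).injective
  refine hx.trans ?_
  simp [map_sum]

theorem eq_of_rTensor_applyₗ_eq {P Q : Type*} [AddCommMonoid P] [Module R P] [AddCommMonoid Q]
    [Module R Q] [Module.Projective R M] [Module.Finite R M] {x y : (M →ₗ[R] P) ⊗[R] Q}
    (h : ∀ m : M, rTensor Q (applyₗ m) x = rTensor Q (applyₗ m) y) : x = y := by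
  have apply_eq : ∀ (z : (M →ₗ[R] P) ⊗[R] Q) (m : M),
      rTensorHomEquivHomRTensor R M P Q z m = rTensor Q (applyₗ m) z := by
    intro z m
    induction z using TensorProduct.induction_on with
    | zero => simp
    | tmul f q => simp
    | add z₁ z₂ h₁ h₂ => simp only [map_add, LinearMap.add_apply, h₁, h₂]
  apply (rTensorHomEquivHomRTensor R M P Q).injective
  ext m
  rw [apply_eq, apply_eq, h]

end TensorProduct

namespace GYD

variable {k H : Type} [Field k] [Ring H] [HopfAlgebra k H] {φ ψ : H ≃ₗ[k] H}
  {M : Type} [AddCommGroup M] [Module k M]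

def IsHopfAut.toBialgHom (hφ : IsHopfAut k H φ) : H →ₐc[k] H :=
  { AlgHom.ofLinearMap φ.toLinearMap hφ.2.1 hφ.1 with
    map_smul' := φ.map_smul
    counit_comp := LinearMap.ext hφ.2.2.2
    map_comp_comul := (LinearMap.ext hφ.2.2.1).symm }

theorem IsHopfAut.antipode_apply (hφ : IsHopfAut k H φ) (a : H) :
    antipode k (φ a) = φ (antipode k a) :=
  LinearMap.congr_fun hφ.toBialgHom.antipode_comp a

theorem IsHopfAut.symm (hφ : IsHopfAut k H φ) : IsHopfAut k H φ.symm := by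
  refine ⟨fun x y => φ.injective ?_, φ.injective ?_, fun h => ?_, fun h => ?_⟩
  · simp [hφ.1]
  · simp [hφ.2.1]
  · have h' := congrArg (map φ.symm.toLinearMap φ.symm.toLinearMap) (hφ.2.2.1 (φ.symm h))
    rw [φ.apply_symm_apply] at h'
    rw [h', ← LinearMap.comp_apply, ← map_comp]
    simp
  · conv_rhs => rw [← φ.apply_symm_apply h, hφ.2.2.2]

theorem IsHopfAut.trans (hφ : IsHopfAut k H φ) (hψ : IsHopfAut k H ψ) :
    IsHopfAut k H (φ.trans ψ) := by
  refine ⟨fun x y => ?_, ?_, fun h => ?_, fun h => ?_⟩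
  · simp [hφ.1, hψ.1]
  · simp [hφ.2.1, hψ.2.1]
  · simp only [LinearEquiv.trans_apply, hψ.2.2.1, hφ.2.2.1]
    rw [← LinearMap.comp_apply, ← map_comp]
    rfl
  · simp [hφ.2.2.2, hψ.2.2.2]

theorem IsHopfAut.antipodeInv_apply (hφ : IsHopfAut k H φ) {Sinv : H → H}
    (hS : IsAntipodeInv k H Sinv) (a : H) : Sinv (φ a) = φ (Sinv a) := by
  conv_lhs => rw [← hS.1 a, ← hφ.antipode_apply, hS.2]

theorem EndActChar.comp_hopfAut {θ : H → H} {actM : H →ₗ[k] M →ₗ[k] M}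
    {actE : H →ₗ[k] Module.End k M →ₗ[k] Module.End k M} (hE : EndActChar k H θ actM actE)
    (hφ : IsHopfAut k H φ) : EndActChar k H (θ ∘ φ) actM (actE ∘ₗ φ.toLinearMap) := by
  intro h u m s p q hpq
  have hcomul : Coalgebra.comul (R := k) (φ h) = ∑ i ∈ s, φ (p i) ⊗ₜ[k] φ (q i) := by
    simp [hφ.2.2.1, hpq, map_sum]
  simp [hE (φ h) u m s _ _ hcomul, hφ.antipode_apply]

theorem EndActChar.unique {θ θ' : H → H} {actM actM' : H →ₗ[k] M →ₗ[k] M}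
    {actE actE' : H →ₗ[k] Module.End k M →ₗ[k] Module.End k M}
    (hE : EndActChar k H θ actM actE) (hE' : EndActChar k H θ' actM' actE')
    (hθ : ∀ h, actM (θ h) = actM' (θ' h)) : actE = actE' := by
  ext h u m
  obtain ⟨s, p, q, hpq⟩ := exists_sum_nat_tmul (Coalgebra.comul (R := k) h)
  simp [hE h u m s p q hpq, hE' h u m s p q hpq, hθ]

theorem EndCoactChar.lTensor_hopfAut {Sinv : H → H} (hS : IsAntipodeInv k H Sinv)
    (hφ : IsHopfAut k H φ) {coactM : M →ₗ[k] M ⊗[k] H}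
    {coactE : Module.End k M →ₗ[k] Module.End k M ⊗[k] H}
    (hE : EndCoactChar k H Sinv coactM coactE) :
    EndCoactChar k H Sinv (lTensor M φ.toLinearMap ∘ₗ coactM)
      (lTensor (Module.End k M) φ.toLinearMap ∘ₗ coactE) := by
  intro u m t m₀ m₁ r n₀ n₁ hm hn
  have hE_u := hE u m t m₀ (φ.symm ∘ m₁) r n₀ (fun j l => φ.symm (n₁ j l))
    (eq_sum_of_lTensor_eq_sum φ hm) (fun j hj => eq_sum_of_lTensor_eq_sum φ (hn j hj))
  rw [comp_apply, ← comp_apply (rTensor H _), rTensor_comp_lTensor, ← lTensor_comp_rTensor,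
    comp_apply, hE_u]
  simp [map_sum, hφ.1, ← hφ.antipodeInv_apply hS]

theorem EndCoactChar.unique [FiniteDimensional k M] {Sinv : H → H}
    {coactM : M →ₗ[k] M ⊗[k] H} {coactE coactE' : Module.End k M →ₗ[k] Module.End k M ⊗[k] H}
    (hE : EndCoactChar k H Sinv coactM coactE) (hE' : EndCoactChar k H Sinv coactM coactE') :
    coactE = coactE' := by
  ext1 u
  refine eq_of_rTensor_applyₗ_eq fun m => ?_
  obtain ⟨t, m₀, m₁, hm⟩ := exists_sum_nat_tmul (coactM m)
  choose r n₀ n₁ hn using fun j => exists_sum_nat_tmul (coactM (u (m₀ j)))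
  rw [hE u m t m₀ m₁ r n₀ n₁ hm fun j _ => hn j, hE' u m t m₀ m₁ r n₀ n₁ hm fun j _ => hn j]

end GYD

theorem statement_17_general
    (k H : Type) [Field k] [Ring H] [HopfAlgebra k H]
    (Sinv : H → H) (hS : GYD.IsAntipodeInv k H Sinv)
    (α β γ : H ≃ₗ[k] H)
    (hα : GYD.IsHopfAut k H α) (hβ : GYD.IsHopfAut k H β)
    (N : Type) [AddCommGroup N] [Module k N] [FiniteDimensional k N]
    (actN : H →ₗ[k] N →ₗ[k] N) (coactN : N →ₗ[k] N ⊗[k] H)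
    -- End(N)
    (actEN : H →ₗ[k] Module.End k N →ₗ[k] Module.End k N)
    (coactEN : Module.End k N →ₗ[k] Module.End k N ⊗[k] H)
    (hactEN : GYD.EndActChar k H ⇑γ.symm actN actEN)
    (hcoactEN : GYD.EndCoactChar k H Sinv coactN coactEN)
    -- End(^{(α,β)}N), where ^{(α,β)}N is N with action h ⇀ n = γ⁻¹βγα⁻¹(h)·n and
    -- coaction n ↦ n₍₀₎ ⊗ αβ⁻¹(n₍₁₎); it is an (αγα⁻¹, αβ⁻¹δγ⁻¹βγα⁻¹)-YD module
    (actETw : H →ₗ[k] Module.End k N →ₗ[k] Module.End k N)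
    (coactETw : Module.End k N →ₗ[k] Module.End k N ⊗[k] H)
    (hactETw : GYD.EndActChar k H (fun h => α (γ.symm (α.symm h)))
      (actN ∘ₗ (α.symm.trans (γ.trans (β.trans γ.symm))).toLinearMap) actETw)
    (hcoactETw : GYD.EndCoactChar k H Sinv
      ((LinearMap.lTensor N (β.symm.trans α).toLinearMap) ∘ₗ coactN) coactETw) :
    -- End(^{(α,β)}N) = End(N)(βα⁻¹) as algebras in the Yetter-Drinfeld category:
    (∀ (h : H) (u : Module.End k N), actETw h u = actEN (β (α.symm h)) u) ∧
    (∀ u : Module.End k N,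
        coactETw u = LinearMap.lTensor (Module.End k N) (β.symm.trans α).toLinearMap
          (coactEN u)) := by
  have hact : actETw = actEN ∘ₗ (α.symm.trans β).toLinearMap :=
    hactETw.unique (hactEN.comp_hopfAut (hα.symm.trans hβ)) fun h => by simp
  have hcoact : coactETw = LinearMap.lTensor _ (β.symm.trans α).toLinearMap ∘ₗ coactEN :=
    hcoactETw.unique (hcoactEN.lTensor_hopfAut hS (hβ.symm.trans hα))
  exact ⟨fun h u => by rw [hact]; rfl, fun u => by rw [hcoact]; rfl⟩

theorem statement_17
    (k H : Type) [Field k] [Ring H] [HopfAlgebra k H]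
    (Sinv : H → H) (hS : GYD.IsAntipodeInv k H Sinv)
    (α β γ δ : H ≃ₗ[k] H)
    (hα : GYD.IsHopfAut k H α) (hβ : GYD.IsHopfAut k H β)
    (hγ : GYD.IsHopfAut k H γ) (hδ : GYD.IsHopfAut k H δ)
    (N : Type) [AddCommGroup N] [Module k N] [FiniteDimensional k N]
    (actN : H →ₗ[k] N →ₗ[k] N) (coactN : N →ₗ[k] N ⊗[k] H)
    (hN : GYD.IsYD k H Sinv ⇑γ ⇑δ actN coactN)
    -- End(N)
    (actEN : H →ₗ[k] Module.End k N →ₗ[k] Module.End k N)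
    (coactEN : Module.End k N →ₗ[k] Module.End k N ⊗[k] H)
    (hactEN : GYD.EndActChar k H ⇑γ.symm actN actEN)
    (hcoactEN : GYD.EndCoactChar k H Sinv coactN coactEN)
    -- End(^{(α,β)}N), where ^{(α,β)}N is N with action h ⇀ n = γ⁻¹βγα⁻¹(h)·n and
    -- coaction n ↦ n₍₀₎ ⊗ αβ⁻¹(n₍₁₎); it is an (αγα⁻¹, αβ⁻¹δγ⁻¹βγα⁻¹)-YD module
    (actETw : H →ₗ[k] Module.End k N →ₗ[k] Module.End k N)
    (coactETw : Module.End k N →ₗ[k] Module.End k N ⊗[k] H)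
    (hactETw : GYD.EndActChar k H (fun h => α (γ.symm (α.symm h)))
      (actN ∘ₗ (α.symm.trans (γ.trans (β.trans γ.symm))).toLinearMap) actETw)
    (hcoactETw : GYD.EndCoactChar k H Sinv
      ((LinearMap.lTensor N (β.symm.trans α).toLinearMap) ∘ₗ coactN) coactETw) :
    -- End(^{(α,β)}N) = End(N)(βα⁻¹) as algebras in the Yetter-Drinfeld category:
    (∀ (h : H) (u : Module.End k N), actETw h u = actEN (β (α.symm h)) u) ∧
    (∀ u : Module.End k N,
        coactETw u = LinearMap.lTensor (Module.End k N) (β.symm.trans α).toLinearMap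
          (coactEN u)) :=
  statement_17_general k H Sinv hS α β γ hα hβ N actN coactN actEN coactEN hactEN hcoactEN actETw
    coactETw hactETw hcoactETw
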